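/- Let 0 < α < 1, 0 < δ < 1, K ≥ 2, let R be the (K-1)×(K-1) upper bidiagonal matrix with diagonal α and superdiagonal 1-α, and let r = (1-α, 0, …, 0)ᵀ ∈ ℝ^{K-1}. Then the k-th entry of (I - (1-δ)Rᵀ)^{-1} r equals (1-δ)^{k-1}(1-α)^k / (1-(1-δ)α)^k for each k ∈ {1,…,K-1}. -/
import Mathlib


/-- Ring network with forgetting: with `r = (1-α,0,…,0)` and the upper-bidiagonal `R`,
the `k`-th entry (1-based `k`; here index `i = k-1`) of `(I - (1-δ)Rᵀ)⁻¹ r` equals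
`(1-δ)^{k-1}(1-α)^k / (1-(1-δ)α)^k`. -/
theorem stmt10 (n : ℕ) (hn : 1 ≤ n) (α δ : ℝ) (hα0 : 0 < α) (hα1 : α < 1)
    (hδ0 : 0 < δ) (hδ1 : δ < 1)
    (R : Matrix (Fin n) (Fin n) ℝ)
    (hR : ∀ i j : Fin n, R i j =
      if i = j then α else if (j : ℕ) = (i : ℕ) + 1 then 1 - α else 0)
    (r : Fin n → ℝ)
    (hr : ∀ j : Fin n, r j = if (j : ℕ) = 0 then 1 - α else 0) :
    ∀ i : Fin n,
      (1 - (1 - δ) • R.transpose)⁻¹.mulVec r i =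
        (1 - δ) ^ (i : ℕ) * (1 - α) ^ ((i : ℕ) + 1) /
          (1 - (1 - δ) * α) ^ ((i : ℕ) + 1) := by
  set c : ℝ := 1 - (1 - δ) * α with hc
  have hcpos : 0 < c := by nlinarith
  have hcne : c ≠ 0 := ne_of_gt hcpos
  set M : Matrix (Fin n) (Fin n) ℝ := 1 - (1 - δ) • R.transpose with hM
  set x : Fin n → ℝ := fun i => (1 - δ) ^ (i : ℕ) * (1 - α) ^ ((i : ℕ) + 1) / c ^ ((i : ℕ) + 1)
    with hx
  have hMij : ∀ i j : Fin n, M i j =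
      if i = j then c else if (i : ℕ) = (j : ℕ) + 1 then -((1 - δ) * (1 - α)) else 0 := by
    intro i j
    simp only [hM, Matrix.sub_apply, Matrix.one_apply, Matrix.smul_apply,
      Matrix.transpose_apply, hR, smul_eq_mul]
    by_cases h : i = j
    · subst h
      simp [hc]
    · have h' : ¬ j = i := fun h2 => h h2.symm
      simp only [h', if_false, h]
      split_ifs <;> ring
  have hMx : ∀ i : Fin n, M.mulVec x i = r i := by
    intro i
    rw [Matrix.mulVec, dotProduct]
    have hsplit : ∀ j : Fin n, M i j * x j =
        (if j = i then c * x j else 0) +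
        (if (i : ℕ) = (j : ℕ) + 1 then -((1 - δ) * (1 - α)) * x j else 0) := by
      intro j
      rw [hMij]
      by_cases h : i = j
      · subst h
        have : ¬ (i : ℕ) = (i : ℕ) + 1 := by omega
        simp [this]
      · have h' : ¬ j = i := fun h2 => h h2.symm
        simp only [h', if_false, h, zero_add]
        split_ifs <;> ring
    rw [Finset.sum_congr rfl (fun j _ => hsplit j), Finset.sum_add_distrib,
      Finset.sum_ite_eq' Finset.univ i (fun j => c * x j)]
    simp only [Finset.mem_univ, if_true]
    rcases Nat.eq_zero_or_eq_succ_pred (i : ℕ) with hi0 | hi1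
    · have hz : ∀ j : Fin n, (if (i : ℕ) = (j : ℕ) + 1 then -((1 - δ) * (1 - α)) * x j else 0) = 0 := by
        intro j
        have : ¬ (i : ℕ) = (j : ℕ) + 1 := by omega
        simp [this]
      rw [Finset.sum_congr rfl (fun j _ => hz j), Finset.sum_const_zero, add_zero]
      have hx' : x i = (1 - α) / c := by rw [hx]; simp [hi0]
      have hr' : r i = 1 - α := by rw [hr]; simp [hi0]
      rw [hx', hr']
      field_simp
    · set m : ℕ := (i : ℕ) - 1 with hm
      have hi : (i : ℕ) = m + 1 := hi1
      have hmn : m < n := by omega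
      set p : Fin n := ⟨m, hmn⟩ with hp
      have hcond : ∀ j : Fin n, ((i : ℕ) = (j : ℕ) + 1) ↔ j = p := by
        intro j
        constructor
        · intro h; apply Fin.ext; simp [hp]; omega
        · intro h; subst h; simp [hp]; omega
      have hrw : ∀ j : Fin n,
          (if (i : ℕ) = (j : ℕ) + 1 then -((1 - δ) * (1 - α)) * x j else 0) =
          (if j = p then -((1 - δ) * (1 - α)) * x j else 0) := by
        intro j
        simp only [hcond j]
      rw [Finset.sum_congr rfl (fun j _ => hrw j),
        Finset.sum_ite_eq' Finset.univ p (fun j => -((1 - δ) * (1 - α)) * x j)]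
      simp only [Finset.mem_univ, if_true]
      have hri : r i = 0 := by rw [hr]; simp [hi]
      rw [hri, hx]
      simp only [hp, hi]
      have hcp : c ^ (m + 1) ≠ 0 := pow_ne_zero _ hcne
      have hcp2 : c ^ (m + 1 + 1) ≠ 0 := pow_ne_zero _ hcne
      field_simp
      ring
  have hlt : M.BlockTriangular (OrderDual.toDual : Fin n → (Fin n)ᵒᵈ) := by
    intro i j hij
    have hij' : (i : Fin n) < j := hij
    rw [hMij]
    have h1 : ¬ i = j := ne_of_lt hij'
    have h2 : ¬ (i : ℕ) = (j : ℕ) + 1 := by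
      have := Fin.lt_iff_val_lt_val.mp hij'
      omega
    simp [h1, h2]
  have hdet : IsUnit M.det := by
    rw [Matrix.det_of_lowerTriangular M hlt]
    have : ∀ i : Fin n, M i i = c := by intro i; rw [hMij]; simp
    rw [Finset.prod_congr rfl (fun i _ => this i), Finset.prod_const]
    exact (pow_ne_zero _ hcne).isUnit
  have hinv : M⁻¹.mulVec r = x := by
    have h1 : M.mulVec x = r := funext hMx
    rw [← h1, Matrix.mulVec_mulVec, Matrix.nonsing_inv_mul M hdet, Matrix.one_mulVec]
  intro i
  have := congrFun hinv i
  rw [← hM] at *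
  rw [this, hx, hc]
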